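/- arXiv:1508.00734 — 2 statements merged into one kernel-verified Lean document; each statement's English description precedes it below -/
import Mathlib

section
/- Let Y be a symmetric space on [0,1] and let w be a positive measurable function on [0,1]. Suppose the weighted lattice Y(w*) contains an unbounded decreasing positive function a on (0,1], where w* is the decreasing rearrangement of w. Then (Y(w))_∘ = Y_∘(w), i.e., the closure of L_∞ in Y(w) coincides with the weighted space built from the closure of L_∞ in Y. -/
open MeasureTheory Filter Set
open scoped ENNReal NNReal BigOperators

noncomputable section

/-- Lebesgue measure restricted to `[0,1]`. -/
def μ01 : Measure ℝ := volume.restrict (Set.Icc (0:ℝ) 1)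

/-- Distribution function of `f` on `[0,1]`. -/
def distFn (f : ℝ → ℝ) (τ : ℝ) : ℝ≥0∞ := μ01 {t | τ < |f t|}

/-- Two functions on `[0,1]` are equimeasurable if they have the same distribution function. -/
def Equimeasurable (f g : ℝ → ℝ) : Prop := ∀ τ : ℝ, 0 < τ → distFn f τ = distFn g τ

/-- Decreasing rearrangement `f*`. -/
def rearr (f : ℝ → ℝ) (t : ℝ) : ℝ := sInf {τ : ℝ | 0 ≤ τ ∧ distFn f τ ≤ ENNReal.ofReal t}

/-- Köthe dual norm of the (extended-valued) function norm `N`. -/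
def kdual (N : (ℝ → ℝ) → ℝ≥0∞) (g : ℝ → ℝ) : ℝ≥0∞ :=
  ⨆ (f : ℝ → ℝ) (_ : Measurable f) (_ : N f ≤ 1), ∫⁻ t, ENNReal.ofReal |f t * g t| ∂μ01

/-- A Banach function lattice on `[0,1]`, described via its extended-valued norm `N`;
the space itself is `{f : N f < ∞}`. -/
structure BFL where
  N : (ℝ → ℝ) → ℝ≥0∞
  norm_zero : ∀ f : ℝ → ℝ, Measurable f → (N f = 0 ↔ f =ᵐ[μ01] 0)
  norm_add : ∀ f g : ℝ → ℝ, N (fun t => f t + g t) ≤ N f + N g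
  norm_smul : ∀ (c : ℝ) (f : ℝ → ℝ), N (fun t => c * f t) = ENNReal.ofReal |c| * N f
  mono : ∀ f g : ℝ → ℝ, (∀ᵐ t ∂μ01, |f t| ≤ |g t|) → N f ≤ N g
  complete : ∀ F : ℕ → ℝ → ℝ, (∀ n, Measurable (F n)) → (∀ n, N (F n) ≠ ∞) →
    (∀ ε : ℝ≥0∞, 0 < ε → ∃ n₀ : ℕ, ∀ m, n₀ ≤ m → ∀ n, n₀ ≤ n →
      N (fun t => F m t - F n t) < ε) →
    ∃ f : ℝ → ℝ, Measurable f ∧ N f ≠ ∞ ∧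
      Tendsto (fun n => N (fun t => F n t - f t)) atTop (nhds 0)

/-- A symmetric (rearrangement invariant) space on `[0,1]`: a Banach function lattice whose
norm is monotone with respect to decreasing rearrangements, and which embeds isometrically
into its second Köthe dual. -/
structure SymSpace extends BFL where
  symm : ∀ f g : ℝ → ℝ, Measurable f → Measurable g →
    (∀ t ∈ Set.Ioc (0:ℝ) 1, rearr g t ≤ rearr f t) → N g ≤ N f
  bidual_iso : ∀ f : ℝ → ℝ, Measurable f → N f ≠ ∞ → kdual (kdual N) f = N f

/-- The Rademacher functions `r_k(t) = sign (sin (2^k π t))`. -/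
def rademacher (k : ℕ) (t : ℝ) : ℝ := Real.sign (Real.sin (2 ^ k * Real.pi * t))

/-- Partial sums `∑_{k=1}^n a_k r_k(t)` of a Rademacher series. -/
def radPartial (a : ℕ → ℝ) (n : ℕ) (t : ℝ) : ℝ := ∑ k ∈ Finset.Icc 1 n, a k * rademacher k t

/-- The Rademacher sum `∑_{k=1}^∞ a_k r_k(t)`, as the (a.e. existing) pointwise limit
of partial sums. -/
def radSum (a : ℕ → ℝ) (t : ℝ) : ℝ := limUnder atTop (fun n => radPartial a n t)

/-- `ℓ₂`-norm of the coefficient sequence `(a_k)_{k ≥ 1}`. -/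
def ell2 (a : ℕ → ℝ) : ℝ≥0∞ := (∑' k : ℕ, ENNReal.ofReal (a (k + 1) ^ 2)) ^ (1/2 : ℝ)

/-- The norm of the weighted space `X(w)`: `‖f‖_{X(w)} = ‖f w‖_X`. -/
def wN (N : (ℝ → ℝ) → ℝ≥0∞) (w : ℝ → ℝ) : (ℝ → ℝ) → ℝ≥0∞ := fun f => N (fun t => f t * w t)

/-- Continuous embeddings `L_∞ ⊂ E ⊂ L₁` for the space with function norm `N`. -/
def SandwichLinftyL1 (N : (ℝ → ℝ) → ℝ≥0∞) : Prop :=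
  (∃ C : ℝ≥0∞, C ≠ ∞ ∧ ∀ f : ℝ → ℝ, Measurable f → N f ≤ C * eLpNorm f ⊤ μ01) ∧
  (∃ C : ℝ≥0∞, C ≠ ∞ ∧ ∀ f : ℝ → ℝ, Measurable f → eLpNorm f 1 μ01 ≤ C * N f)

/-- The (equivalent, Marcinkiewicz-type) norm on the Zygmund space `Exp L^p`:
`sup_{0<t≤1} f*(t) log^{-1/p}(e/t)`. -/
def expLpNorm (p : ℝ) (f : ℝ → ℝ) : ℝ≥0∞ :=
  ⨆ t ∈ Set.Ioc (0:ℝ) 1,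
    ENNReal.ofReal (rearr f t * Real.log (Real.exp 1 / t) ^ (-(1/p) : ℝ))

/-- Membership in `G`, the closure of `L_∞` in `Exp L²`. -/
def MemG (f : ℝ → ℝ) : Prop :=
  Measurable f ∧ expLpNorm 2 f ≠ ∞ ∧ ∀ ε : ℝ, 0 < ε → ∃ g : ℝ → ℝ, Measurable g ∧
    eLpNorm g ⊤ μ01 ≠ ∞ ∧ expLpNorm 2 (fun t => f t - g t) ≤ ENNReal.ofReal ε

/-- `G ⊂ E`, where `E` is the space with function norm `N`. -/
def GSubset (N : (ℝ → ℝ) → ℝ≥0∞) : Prop := ∀ f : ℝ → ℝ, MemG f → N f ≠ ∞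

/-- Membership in `G' = L log^{1/2} L`: `∫₀¹ f*(t) log^{1/2}(e/t) dt < ∞`. -/
def MemGDual (f : ℝ → ℝ) : Prop :=
  ∫⁻ t in Set.Ioc (0:ℝ) 1,
    ENNReal.ofReal (rearr f t * Real.sqrt (Real.log (Real.exp 1 / t))) ≠ ∞

/-- Membership in the Rademacher multiplicator space `M(X)` of the space with norm `N`:
`f ⬝ ∑ a_k r_k ∈ X` for every Rademacher sum `∑ a_k r_k ∈ X`. -/
def MemRadMult (N : (ℝ → ℝ) → ℝ≥0∞) (f : ℝ → ℝ) : Prop :=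
  ∀ a : ℕ → ℝ, ell2 a ≠ ∞ → N (radSum a) ≠ ∞ → N (fun t => f t * radSum a t) ≠ ∞

/-- The norm of the Rademacher multiplicator space `M(X)`. -/
def radMultNorm (N : (ℝ → ℝ) → ℝ≥0∞) (f : ℝ → ℝ) : ℝ≥0∞ :=
  ⨆ (a : ℕ → ℝ) (_ : ell2 a ≠ ∞) (_ : N (radSum a) ≤ 1), N (fun t => f t * radSum a t)

/-- Membership in the symmetric kernel `Sym(X)` of `M(X)`: every function equimeasurable
with `f` belongs to `M(X)`. -/
def MemSymKernel (N : (ℝ → ℝ) → ℝ≥0∞) (f : ℝ → ℝ) : Prop :=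
  ∀ g : ℝ → ℝ, Measurable g → Equimeasurable f g → MemRadMult N g

/-- The Rademacher sequence `{r_k}` is equivalent, in the space with norm `N`, to the unit
vector basis of `ℓ₂`. -/
def RadEquivL2 (N : (ℝ → ℝ) → ℝ≥0∞) : Prop :=
  ∃ c C : ℝ, 0 < c ∧ 0 < C ∧ ∀ a : ℕ → ℝ, ell2 a ≠ ∞ →
    ENNReal.ofReal c * ell2 a ≤ N (radSum a) ∧ N (radSum a) ≤ ENNReal.ofReal C * ell2 a

/-- Rademacher coefficients `c_k(f) = ∫₀¹ f(u) r_k(u) du`. -/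
def radCoeff (f : ℝ → ℝ) (k : ℕ) : ℝ := ∫ t in Set.Icc (0:ℝ) 1, f t * rademacher k t

/-- The Rademacher orthogonal projection `P f = ∑_{k=1}^∞ c_k(f) r_k`. -/
def radProj (f : ℝ → ℝ) : ℝ → ℝ := radSum (radCoeff f)

/-- `P` is bounded in the space with function norm `N`: for every `f` in the space, the
series `∑ c_k(f) r_k` converges in the space and `‖P f‖ ≤ C ‖f‖`. -/
def RadProjBounded (N : (ℝ → ℝ) → ℝ≥0∞) : Prop :=
  ∃ C : ℝ≥0∞, C ≠ ∞ ∧ ∀ f : ℝ → ℝ, Measurable f → N f ≠ ∞ →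
    N (radProj f) ≤ C * N f ∧
    Tendsto (fun n => N (fun t => radProj f t - radPartial (radCoeff f) n t)) atTop (nhds 0)

/-- The Lorentz norm `‖x‖_{Λ(χ)} = ∫₀¹ x*(s) dχ(s)`, written in the equivalent
layer-cake form `∫₀^∞ χ(n_x(τ)) dτ`. -/
def lorentzNorm (χ : ℝ → ℝ) (x : ℝ → ℝ) : ℝ≥0∞ :=
  ∫⁻ τ in Set.Ioi (0:ℝ), ENNReal.ofReal (χ (distFn x τ).toReal)

/-- The Marcinkiewicz norm `‖x‖_{M(χ)} = sup_{0<t≤1} (χ(t)/t) ∫₀^t x*(s) ds`. -/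
def marcNorm (χ : ℝ → ℝ) (x : ℝ → ℝ) : ℝ≥0∞ :=
  ⨆ t ∈ Set.Ioc (0:ℝ) 1,
    ENNReal.ofReal (χ t / t) * ∫⁻ s in Set.Ioc (0:ℝ) t, ENNReal.ofReal (rearr x s)

/-- The `Δ²`-condition: `φ(t) ≤ C φ(t²)` for some `C > 0` and all `0 < t ≤ 1`. -/
def DeltaSq (φ : ℝ → ℝ) : Prop := ∃ C > 0, ∀ t ∈ Set.Ioc (0:ℝ) 1, φ t ≤ C * φ (t ^ 2)

/-- `ψ'(t) = φ'(t) log^{1/2}(e/t)`. -/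
def psiDeriv (φ : ℝ → ℝ) (t : ℝ) : ℝ := deriv φ t * Real.sqrt (Real.log (Real.exp 1 / t))

/-- `ψ(t) = ∫₀^t φ'(s) log^{1/2}(e/s) ds`, the increasing concave function with `ψ(0) = 0`
and `ψ' = φ' log^{1/2}(e/·)`. -/
def psiFun (φ : ℝ → ℝ) (t : ℝ) : ℝ := ∫ s in Set.Ioc (0:ℝ) t, psiDeriv φ s

/-- The `L₁` function norm on `[0,1]`. -/
def L1N : (ℝ → ℝ) → ℝ≥0∞ := fun f => eLpNorm f 1 μ01

/-- The dyadic interval `Δ_n^j = [(j-1) 2^{-n}, j 2^{-n}]`. -/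
def dyadic (n j : ℕ) : Set ℝ := Set.Icc (((j:ℝ) - 1) / 2 ^ n) ((j:ℝ) / 2 ^ n)

/-- `ε^n_{ij}`, the constant value of `r_i` on (the interior of) `Δ_n^j` for `i ≤ n`. -/
def epsVal (n i j : ℕ) : ℝ := rademacher i (((j:ℝ) - 1/2) / 2 ^ n)

/-- Membership in `E_∘`, the closure of `L_∞` in the space with function norm `N`. -/
def MemClosLinfty (N : (ℝ → ℝ) → ℝ≥0∞) (f : ℝ → ℝ) : Prop :=
  AEMeasurable f μ01 ∧ N f ≠ ∞ ∧ ∀ ε : ℝ, 0 < ε → ∃ g : ℝ → ℝ, Measurable g ∧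
    eLpNorm g ⊤ μ01 ≠ ∞ ∧ N (fun t => f t - g t) ≤ ENNReal.ofReal ε

end

namespace Stmt4Aux

open MeasureTheory Filter Set
open scoped ENNReal NNReal

lemma mu01_univ : μ01 univ = 1 := by
  simp [μ01, Real.volume_Icc]

lemma distFn_anti (f : ℝ → ℝ) : Antitone (distFn f) := by
  intro τ1 τ2 h
  exact measure_mono fun t ht => lt_of_le_of_lt h ht

lemma S_nonempty (f : ℝ → ℝ) (hf : Measurable f) {s : ℝ} (hs : 0 < s) :
    {τ : ℝ | 0 ≤ τ ∧ distFn f τ ≤ ENNReal.ofReal s}.Nonempty := by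
  have hmeas : ∀ n : ℕ, NullMeasurableSet {t : ℝ | (n : ℝ) < |f t|} μ01 :=
    fun n => ((measurableSet_lt measurable_const hf.abs)).nullMeasurableSet
  have hanti : Antitone fun n : ℕ => {t : ℝ | (n : ℝ) < |f t|} := by
    intro n m hnm t ht
    exact lt_of_le_of_lt (show (n:ℝ) ≤ (m:ℝ) by exact_mod_cast hnm) ht
  have hfin : ∃ n : ℕ, μ01 {t : ℝ | (n : ℝ) < |f t|} ≠ ∞ := by
    refine ⟨0, ?_⟩
    exact ((measure_mono (subset_univ _)).trans_lt (by rw [mu01_univ]; exact ENNReal.one_lt_top)).ne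
  have htend := tendsto_measure_iInter_atTop hmeas hanti hfin
  have hempty : (⋂ n : ℕ, {t : ℝ | (n : ℝ) < |f t|}) = ∅ := by
    ext t
    simp only [mem_iInter, mem_setOf_eq, mem_empty_iff_false, iff_false, not_forall, not_lt]
    obtain ⟨n, hn⟩ := exists_nat_ge |f t|
    exact ⟨n, hn⟩
  rw [hempty, measure_empty] at htend
  have := htend.eventually_lt_const (ENNReal.ofReal_pos.mpr hs)
  obtain ⟨n, hn⟩ := this.exists
  exact ⟨n, Nat.cast_nonneg n, hn.le⟩

lemma rearr_nonneg (f : ℝ → ℝ) (t : ℝ) : 0 ≤ rearr f t :=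
  Real.sInf_nonneg fun τ hτ => hτ.1

lemma rearr_le (f : ℝ → ℝ) {s τ : ℝ} (h0 : 0 ≤ τ) (h : distFn f τ ≤ ENNReal.ofReal s) :
    rearr f s ≤ τ :=
  csInf_le ⟨0, fun x hx => hx.1⟩ ⟨h0, h⟩

lemma le_rearr (f : ℝ → ℝ) (hf : Measurable f) {s τ : ℝ} (hs : 0 < s)
    (h : ∀ τ', 0 ≤ τ' → distFn f τ' ≤ ENNReal.ofReal s → τ ≤ τ') : τ ≤ rearr f s :=
  le_csInf (S_nonempty f hf hs) fun x hx => h x hx.1 hx.2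

lemma rearr_anti (f : ℝ → ℝ) (hf : Measurable f) {s1 s2 : ℝ} (h1 : 0 < s1) (h : s1 ≤ s2) :
    rearr f s2 ≤ rearr f s1 :=
  csInf_le_csInf ⟨0, fun x hx => hx.1⟩ (S_nonempty f hf h1)
    fun τ hτ => ⟨hτ.1, hτ.2.trans (ENNReal.ofReal_le_ofReal h)⟩

lemma rearr_eq_zero (f : ℝ → ℝ) {s : ℝ} (hsupp : μ01 {t | f t ≠ 0} ≤ ENNReal.ofReal s) :
    rearr f s = 0 := by
  have h0 : distFn f 0 ≤ ENNReal.ofReal s := by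
    have hset : {t : ℝ | (0:ℝ) < |f t|} = {t | f t ≠ 0} := by ext t; simp [abs_pos]
    show μ01 {t : ℝ | (0:ℝ) < |f t|} ≤ _
    rw [hset]; exact hsupp
  exact le_antisymm (rearr_le f le_rfl h0) (rearr_nonneg f s)


lemma exists_right (f : ℝ → ℝ) (hf : Measurable f) {s b β : ℝ} (hs : 0 < s) (hb : s < b)
    (hβ : β < rearr f s) : ∃ s', s < s' ∧ s' ≤ b ∧ β < rearr f s' := by
  by_contra hcon
  push_neg at hcon
  have key : ∀ η : ℝ, 0 < η → rearr f s ≤ β + η := by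
    intro η hη
    have hβ0 : 0 ≤ β := by
      have h1 : s < (s + b) / 2 := by linarith
      have h2 : (s + b) / 2 ≤ b := by linarith
      exact le_trans (rearr_nonneg f _) (hcon _ h1 h2)
    refine rearr_le f (by linarith) ?_
    have step : ∀ s', s < s' → s' ≤ b → distFn f (β + η) ≤ ENNReal.ofReal s' := by
      intro s' h1 h2
      have hr : rearr f s' ≤ β := hcon s' h1 h2
      have hlt : sInf {τ : ℝ | 0 ≤ τ ∧ distFn f τ ≤ ENNReal.ofReal s'} < β + η :=
        lt_of_le_of_lt hr (by linarith)
      obtain ⟨τ', hτ'S, hτ'lt⟩ :=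
        (csInf_lt_iff ⟨0, fun x hx => hx.1⟩ (S_nonempty f hf (hs.trans h1))).1 hlt
      exact le_trans (distFn_anti f hτ'lt.le) hτ'S.2
    -- take the limit s' → s⁺
    have htend : Tendsto (fun n : ℕ => ENNReal.ofReal (s + (b - s) / (n + 1))) atTop
        (nhds (ENNReal.ofReal s)) := by
      have h1 : Tendsto (fun n : ℕ => s + (b - s) / (n + 1)) atTop (nhds s) := by
        have h2 : Tendsto (fun n : ℕ => (b - s) * (1 / (n + 1))) atTop (nhds ((b - s) * 0)) :=
          tendsto_const_nhds.mul tendsto_one_div_add_atTop_nhds_zero_nat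
        have h3 := (tendsto_const_nhds (x := s) (f := atTop (α := ℕ))).add h2
        simp only [mul_zero, add_zero, mul_one_div] at h3
        exact h3
      exact (ENNReal.continuous_ofReal.tendsto s).comp h1
    refine ge_of_tendsto' htend fun n => ?_
    have hpos : 0 < (b - s) / (n + 1 : ℝ) := div_pos (by linarith) (by positivity)
    have hle : (b - s) / (n + 1 : ℝ) ≤ b - s := by
      apply div_le_self (by linarith) (by push_cast; linarith [Nat.cast_nonneg (α := ℝ) n])
    exact step _ (by linarith) (by linarith)
  by_contra _
  have : rearr f s ≤ β := le_of_forall_pos_le_add key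
  linarith


lemma keyL (Y : SymSpace) (w : ℝ → ℝ) (hw : Measurable w)
    (a : ℝ → ℝ) (hapos : ∀ t ∈ Ioc (0:ℝ) 1, 0 < a t)
    (hadec : AntitoneOn a (Ioc (0:ℝ) 1))
    (haunb : ¬ BddAbove (a '' Ioc (0:ℝ) 1))
    (hamem : Y.N (fun t => a t * rearr w t) ≠ ∞)
    {ε C : ℝ} (hε : 0 < ε) (hC : 0 < C) :
    ∃ δ : ℝ, 0 < δ ∧ δ ≤ 1/2 ∧ ∀ x : ℝ → ℝ, Measurable x →
      (∀ s ∈ Ioc (0:ℝ) δ, rearr x s ≤ C * rearr w s) →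
      (∀ s ∈ Ioc δ (1:ℝ), rearr x s = 0) →
      Y.N x ≤ ENNReal.ofReal ε := by
  set B := Y.N (fun t => a t * rearr w t) with hB
  obtain ⟨s0, hs0mem, hKbig⟩ : ∃ s0 ∈ Ioc (0:ℝ) 1, C * (B.toReal + 1) / ε < a s0 := by
    rw [not_bddAbove_iff] at haunb
    obtain ⟨y, ⟨s0, hs0, rfl⟩, hy⟩ := haunb (C * (B.toReal + 1) / ε)
    exact ⟨s0, hs0, hy⟩
  set K := a s0 with hKdef
  have hK0 : 0 < K := hapos s0 hs0mem
  obtain ⟨hs00, hs01⟩ := hs0mem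
  refine ⟨s0/2, by linarith, by linarith, ?_⟩
  intro x hx hx1 hx2
  set m : ℝ → ℝ := fun t => if 0 < t ∧ t ≤ s0 then C * rearr w t else 0 with hm
  have hm_nonneg : ∀ t, 0 ≤ m t := by
    intro t
    simp only [hm]
    split_ifs with h
    · exact mul_nonneg hC.le (rearr_nonneg w t)
    · exact le_rfl
  have hm_val : ∀ t, 0 < t → t ≤ s0 → m t = C * rearr w t := by
    intro t h1 h2
    simp only [hm]
    exact if_pos (show 0 < t ∧ t ≤ s0 from ⟨h1, h2⟩)
  have hm_meas : Measurable m := by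
    apply measurable_of_Ioi
    intro c
    rcases lt_or_ge c 0 with hc | hc
    · have : m ⁻¹' Ioi c = univ := eq_univ_of_forall fun t => lt_of_lt_of_le hc (hm_nonneg t)
      rw [this]; exact MeasurableSet.univ
    · have hord : OrdConnected (m ⁻¹' Ioi c) := by
        constructor
        intro p hp q hq r hr
        simp only [mem_preimage, mem_Ioi, hm] at hp hq ⊢
        have hpmem : 0 < p ∧ p ≤ s0 := by
          by_contra hcontra
          rw [if_neg hcontra] at hp; exact absurd hp (not_lt.mpr hc)
        have hqmem : 0 < q ∧ q ≤ s0 := by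
          by_contra hcontra
          rw [if_neg hcontra] at hq; exact absurd hq (not_lt.mpr hc)
        have hr0 : 0 < r := lt_of_lt_of_le hpmem.1 hr.1
        have hrs0 : r ≤ s0 := le_trans hr.2 hqmem.2
        rw [if_pos (show 0 < r ∧ r ≤ s0 from ⟨hr0, hrs0⟩)]
        rw [if_pos (show 0 < q ∧ q ≤ s0 from ⟨hqmem.1, hqmem.2⟩)] at hq
        calc c < C * rearr w q := hq
          _ ≤ C * rearr w r := by
              apply mul_le_mul_of_nonneg_left (rearr_anti w hw hr0 hr.2) hC.le
      exact hord.measurableSet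
  -- comparison of rearrangements
  have hcomp : ∀ s ∈ Ioc (0:ℝ) 1, rearr x s ≤ rearr m s := by
    intro s hs
    rcases le_or_gt s (s0/2) with hcase | hcase
    · -- small s
      refine le_trans (hx1 s ⟨hs.1, hcase⟩) ?_
      refine le_rearr m hm_meas hs.1 ?_
      intro τ hτ0 hτdist
      by_contra hlt
      push_neg at hlt
      have hβ : τ / C < rearr w s := (div_lt_iff₀' hC).mpr hlt
      obtain ⟨s', hss', hs'le, hs'gt⟩ := exists_right w hw hs.1 (by linarith : s < s0) hβ
      have hsubset : Ioc (0:ℝ) s' ⊆ {t : ℝ | τ < |m t|} := by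
        intro u hu
        have hus0 : u ≤ s0 := le_trans hu.2 hs'le
        have : rearr w s' ≤ rearr w u := rearr_anti w hw hu.1 hu.2
        have h1 : τ < C * rearr w u := by
          rw [div_lt_iff₀' hC] at hs'gt
          calc τ < C * rearr w s' := hs'gt
            _ ≤ C * rearr w u := mul_le_mul_of_nonneg_left this hC.le
        rw [mem_setOf_eq, hm_val u hu.1 hus0,
          abs_of_nonneg (mul_nonneg hC.le (rearr_nonneg w u))]
        exact h1
      have hmeasIoc : μ01 (Ioc (0:ℝ) s') = ENNReal.ofReal s' := by
        have hIocsub : Ioc (0:ℝ) s' ⊆ Icc (0:ℝ) 1 :=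
          fun u hu => ⟨hu.1.le, le_trans hu.2 (le_trans hs'le hs01)⟩
        rw [μ01, Measure.restrict_apply measurableSet_Ioc,
          inter_eq_left.mpr hIocsub, Real.volume_Ioc, sub_zero]
      have : ENNReal.ofReal s' ≤ ENNReal.ofReal s := by
        rw [← hmeasIoc]
        exact le_trans (measure_mono hsubset) hτdist
      rw [ENNReal.ofReal_le_ofReal_iff hs.1.le] at this
      linarith
    · -- large s
      rw [hx2 s ⟨hcase, hs.2⟩]
      exact rearr_nonneg m s
  have h1 : Y.N x ≤ Y.N m := Y.symm m x hm_meas hx hcomp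
  have h2 : Y.N m ≤ Y.N (fun t => (C / K) * (a t * rearr w t)) := by
    apply Y.mono
    apply Eventually.of_forall
    intro t
    simp only [hm]
    split_ifs with h
    · have htmem : t ∈ Ioc (0:ℝ) 1 := ⟨h.1, le_trans h.2 hs01⟩
      have haK : K ≤ a t := hadec htmem ⟨hs00, hs01⟩ h.2
      have ha0 : 0 < a t := hapos t htmem
      rw [abs_of_nonneg (mul_nonneg hC.le (rearr_nonneg w t)),
        abs_of_nonneg (mul_nonneg (div_nonneg hC.le hK0.le)
          (mul_nonneg ha0.le (rearr_nonneg w t)))]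
      have : C = C / K * K := by field_simp
      calc C * rearr w t = C / K * K * rearr w t := by rw [← this]
        _ ≤ C / K * a t * rearr w t := by
            apply mul_le_mul_of_nonneg_right _ (rearr_nonneg w t)
            exact mul_le_mul_of_nonneg_left haK (div_nonneg hC.le hK0.le)
        _ = C / K * (a t * rearr w t) := by ring
    · simp only [abs_zero]
      exact abs_nonneg _
  have h3 : Y.N (fun t => (C / K) * (a t * rearr w t)) = ENNReal.ofReal |C / K| * B :=
    Y.norm_smul (C / K) (fun t => a t * rearr w t)
  -- final arithmetic
  have hfinal : ENNReal.ofReal |C / K| * B ≤ ENNReal.ofReal ε := by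
    rw [abs_of_nonneg (div_nonneg hC.le hK0.le)]
    have hBfin : B = ENNReal.ofReal B.toReal := (ENNReal.ofReal_toReal hamem).symm
    rw [hBfin, ← ENNReal.ofReal_mul (div_nonneg hC.le hK0.le)]
    apply ENNReal.ofReal_le_ofReal
    have hBt : 0 ≤ B.toReal := ENNReal.toReal_nonneg
    rw [div_mul_eq_mul_div, div_le_iff₀ hK0]
    have hεK : C * (B.toReal + 1) < ε * K := by
      rw [div_lt_iff₀ hε] at hKbig
      calc C * (B.toReal + 1) < a s0 * ε := hKbig
        _ = ε * K := by rw [hKdef]; ring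
    nlinarith
  calc Y.N x ≤ Y.N m := h1
    _ ≤ Y.N (fun t => (C / K) * (a t * rearr w t)) := h2
    _ = ENNReal.ofReal |C / K| * B := h3
    _ ≤ ENNReal.ofReal ε := hfinal


lemma exists_bound (g : ℝ → ℝ) (hgb : eLpNorm g ⊤ μ01 ≠ ∞) :
    ∃ D : ℝ, 0 ≤ D ∧ ∀ᵐ t ∂μ01, |g t| ≤ D := by
  refine ⟨(eLpNorm g ⊤ μ01).toReal, ENNReal.toReal_nonneg, ?_⟩
  rw [eLpNorm_exponent_top] at hgb
  filter_upwards [ae_le_eLpNormEssSup (f := g) (μ := μ01)] with t ht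
  have h2 := ENNReal.toReal_mono hgb ht
  rw [eLpNorm_exponent_top]
  simpa [Real.norm_eq_abs] using h2

end Stmt4Aux

open Stmt4Aux

/-- Lemma 1. Let `Y` be a symmetric space and `w` a positive measurable
weight. Suppose `Y(w*)` contains an unbounded decreasing positive function `a` on `(0,1]`.
Then `(Y(w))_∘ = Y_∘(w)`. -/
theorem statement4 (Y : SymSpace) (w : ℝ → ℝ) (hw : Measurable w)
    (hwpos : ∀ᵐ t ∂μ01, 0 < w t)
    (a : ℝ → ℝ) (hapos : ∀ t ∈ Set.Ioc (0:ℝ) 1, 0 < a t)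
    (hadec : AntitoneOn a (Set.Ioc (0:ℝ) 1))
    (haunb : ¬ BddAbove (a '' Set.Ioc (0:ℝ) 1))
    (hamem : Y.N (fun t => a t * rearr w t) ≠ ∞) :
    ∀ f : ℝ → ℝ, MemClosLinfty (wN Y.N w) f ↔ MemClosLinfty Y.N (fun t => f t * w t) := by
  intro f
  constructor
  · rintro ⟨hfm, hfN, hfapp⟩
    refine ⟨hfm.mul hw.aemeasurable, hfN, ?_⟩
    intro ε hε
    obtain ⟨g, hg, hgb, hgapp⟩ := hfapp (ε/2) (by linarith)
    obtain ⟨D, hD0, hD⟩ := exists_bound g hgb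
    obtain ⟨δ, hδ0, hδhalf, hL⟩ := keyL Y w hw a hapos hadec haunb hamem
        (show (0:ℝ) < ε/2 by linarith) (show (0:ℝ) < D + 1 by linarith)
    obtain ⟨M, hM0, hM⟩ := S_nonempty w hw hδ0
    set h : ℝ → ℝ := fun t => if |w t| ≤ M then g t * w t else 0 with hh
    have hhmeas : Measurable h :=
      Measurable.ite (measurableSet_le hw.abs measurable_const) (hg.mul hw) measurable_const
    have hhbdd : eLpNorm h ⊤ μ01 ≠ ∞ := by
      have hb : ∀ᵐ t ∂μ01, ‖h t‖ ≤ D * M := by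
        filter_upwards [hD] with t ht
        simp only [Real.norm_eq_abs, hh]
        split_ifs with hc
        · rw [abs_mul]; exact mul_le_mul ht hc (abs_nonneg _) hD0
        · simpa using mul_nonneg hD0 hM0
      rw [eLpNorm_exponent_top]
      exact ((eLpNormEssSup_le_of_ae_bound hb).trans_lt ENNReal.ofReal_lt_top).ne
    refine ⟨h, hhmeas, hhbdd, ?_⟩
    set G : ℝ → ℝ := fun t => if |w t| ≤ M then 0 else g t * w t with hG
    have hGmeas : Measurable G :=
      Measurable.ite (measurableSet_le hw.abs measurable_const) measurable_const (hg.mul hw)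
    have hG1 : ∀ s ∈ Set.Ioc (0:ℝ) δ, rearr G s ≤ (D+1) * rearr w s := by
      intro s hs
      have hne := S_nonempty w hw hs.1
      have key : ∀ τ ∈ {τ : ℝ | 0 ≤ τ ∧ distFn w τ ≤ ENNReal.ofReal s},
          rearr G s ≤ (D+1) * τ := by
        intro τ hτ
        apply rearr_le G (mul_nonneg (by linarith) hτ.1)
        have hsub : {t : ℝ | (D+1) * τ < |G t|} ⊆
            {t : ℝ | τ < |w t|} ∪ {t : ℝ | ¬ (|g t| ≤ D)} := by
          intro t ht
          by_cases hgt : |g t| ≤ D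
          · left
            simp only [Set.mem_setOf_eq] at ht ⊢
            by_contra hwle
            push_neg at hwle
            have hGle : |G t| ≤ (D+1) * τ := by
              simp only [hG]
              split_ifs with hc
              · simpa using mul_nonneg (by linarith : (0:ℝ) ≤ D+1) hτ.1
              · rw [abs_mul]
                calc |g t| * |w t| ≤ D * τ := mul_le_mul hgt hwle (abs_nonneg _) hD0
                  _ ≤ (D+1) * τ := by nlinarith [hτ.1]
            exact absurd ht (not_lt.mpr hGle)
          · right; exact hgt
        calc distFn G ((D+1)*τ)
            ≤ μ01 ({t : ℝ | τ < |w t|} ∪ {t : ℝ | ¬ (|g t| ≤ D)}) := measure_mono hsub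
          _ ≤ μ01 {t : ℝ | τ < |w t|} + μ01 {t : ℝ | ¬ (|g t| ≤ D)} := measure_union_le _ _
          _ = distFn w τ := by rw [ae_iff.mp hD, add_zero]; rfl
          _ ≤ ENNReal.ofReal s := hτ.2
      have hdiv : rearr G s / (D+1) ≤ rearr w s := by
        apply le_csInf hne
        intro τ hτ
        rw [div_le_iff₀ (by linarith : (0:ℝ) < D+1)]
        calc rearr G s ≤ (D+1) * τ := key τ hτ
          _ = τ * (D+1) := by ring
      calc rearr G s = rearr G s / (D+1) * (D+1) := by field_simp
        _ ≤ rearr w s * (D+1) := mul_le_mul_of_nonneg_right hdiv (by linarith)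
        _ = (D+1) * rearr w s := by ring
    have hG2 : ∀ s ∈ Set.Ioc δ (1:ℝ), rearr G s = 0 := by
      intro s hs
      apply rearr_eq_zero
      refine le_trans (measure_mono ?_) (le_trans hM (ENNReal.ofReal_le_ofReal hs.1.le))
      intro t ht
      simp only [Set.mem_setOf_eq, hG] at ht ⊢
      by_contra hnot
      simp only [not_lt] at hnot
      rw [if_pos hnot] at ht
      exact ht rfl
    have hGN : Y.N G ≤ ENNReal.ofReal (ε/2) := hL G hGmeas hG1 hG2
    have hdecomp : (fun t => f t * w t - h t) = fun t => (f t - g t) * w t + G t := by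
      funext t
      simp only [hh, hG]
      split_ifs with hc <;> ring
    have hfirst : Y.N (fun t => (f t - g t) * w t) ≤ ENNReal.ofReal (ε/2) := hgapp
    show Y.N (fun t => f t * w t - h t) ≤ ENNReal.ofReal ε
    calc Y.N (fun t => f t * w t - h t) = Y.N (fun t => (f t - g t) * w t + G t) := by
          rw [hdecomp]
      _ ≤ Y.N (fun t => (f t - g t) * w t) + Y.N G := Y.norm_add _ _
      _ ≤ ENNReal.ofReal (ε/2) + ENNReal.ofReal (ε/2) := add_le_add hfirst hGN
      _ = ENNReal.ofReal ε := by
          rw [← ENNReal.ofReal_add (by linarith) (by linarith)]; norm_num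
  · rintro ⟨hfwm, hfwN, happ⟩
    have hfmeas : AEMeasurable f μ01 := by
      have h1 : AEMeasurable (fun t => f t * w t / w t) μ01 := hfwm.div hw.aemeasurable
      apply h1.congr
      filter_upwards [hwpos] with t ht
      field_simp
    refine ⟨hfmeas, hfwN, ?_⟩
    intro ε hε
    obtain ⟨τ0, hτ00, hτ0⟩ : ∃ τ0 : ℝ, 0 < τ0 ∧ ENNReal.ofReal (1/2) < distFn w τ0 := by
      have hmono : Monotone fun n : ℕ => {t : ℝ | 1 / (n+1 : ℝ) < |w t|} := by
        intro n m hnm t ht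
        simp only [Set.mem_setOf_eq] at ht ⊢
        refine lt_of_le_of_lt ?_ ht
        apply one_div_le_one_div_of_le (by positivity)
        have hcast : (n:ℝ) ≤ m := Nat.cast_le.mpr hnm
        linarith
      have htend := tendsto_measure_iUnion_atTop (μ := μ01) hmono
      have hunion : (⋃ n : ℕ, {t : ℝ | 1 / (n+1 : ℝ) < |w t|}) = {t : ℝ | w t ≠ 0} := by
        ext t
        simp only [Set.mem_iUnion, Set.mem_setOf_eq]
        constructor
        · rintro ⟨n, hn⟩
          intro h0
          rw [h0, abs_zero] at hn
          have : (0:ℝ) < 1 / (n+1 : ℝ) := by positivity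
          linarith
        · intro hne
          exact exists_nat_one_div_lt (abs_pos.mpr hne)
      have hone : μ01 {t : ℝ | w t ≠ 0} = 1 := by
        have hz : μ01 {t : ℝ | w t ≠ 0}ᶜ = 0 := by
          apply measure_mono_null ?_ (ae_iff.mp hwpos)
          intro t ht
          simp only [Set.mem_compl_iff, Set.mem_setOf_eq, not_not] at ht
          simp only [Set.mem_setOf_eq, not_lt, ht, le_refl]
        have hms : MeasurableSet {t : ℝ | w t ≠ (0:ℝ)} :=
          (measurableSet_eq_fun hw measurable_const).compl
        have hadd := measure_add_measure_compl (μ := μ01) hms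
        rw [hz, add_zero, mu01_univ] at hadd
        exact hadd
      rw [hunion, hone] at htend
      have hev := htend.eventually_const_lt
        (show ENNReal.ofReal (1/2) < 1 by
          rw [show (1:ℝ≥0∞) = ENNReal.ofReal 1 by simp]
          exact ENNReal.ofReal_lt_ofReal_iff_of_nonneg (by norm_num) |>.mpr (by norm_num))
      obtain ⟨n, hn⟩ := hev.exists
      exact ⟨1/(n+1 : ℝ), by positivity, hn⟩
    obtain ⟨h, hhmeas2, hhb, hhapp⟩ := happ (ε/2) (by linarith)
    obtain ⟨D, hD0, hD⟩ := exists_bound h hhb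
    obtain ⟨δ, hδ0, hδhalf, hL⟩ := keyL Y w hw a hapos hadec haunb hamem
        (show (0:ℝ) < ε/2 by linarith)
        (show (0:ℝ) < (D+1)/τ0 from div_pos (by linarith) hτ00)
    obtain ⟨σ, hσ0, hσ⟩ : ∃ σ : ℝ, 0 < σ ∧ μ01 {t : ℝ | |w t| < σ} ≤ ENNReal.ofReal δ := by
      have hanti : Antitone fun n : ℕ => {t : ℝ | |w t| < 1/(n+1 : ℝ)} := by
        intro n m hnm t ht
        simp only [Set.mem_setOf_eq] at ht ⊢
        refine lt_of_lt_of_le ht ?_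
        apply one_div_le_one_div_of_le (by positivity)
        have hcast : (n:ℝ) ≤ m := Nat.cast_le.mpr hnm
        linarith
      have hmeas : ∀ n : ℕ, NullMeasurableSet {t : ℝ | |w t| < 1/(n+1:ℝ)} μ01 :=
        fun n => (measurableSet_lt hw.abs measurable_const).nullMeasurableSet
      have hfin : ∃ n : ℕ, μ01 {t : ℝ | |w t| < 1/(n+1:ℝ)} ≠ ∞ := by
        refine ⟨0, ?_⟩
        exact ((measure_mono (Set.subset_univ _)).trans_lt
          (by rw [mu01_univ]; exact ENNReal.one_lt_top)).ne
      have htend := tendsto_measure_iInter_atTop hmeas hanti hfin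
      have hint : (⋂ n : ℕ, {t : ℝ | |w t| < 1/(n+1:ℝ)}) = {t : ℝ | w t = 0} := by
        ext t
        simp only [Set.mem_iInter, Set.mem_setOf_eq]
        constructor
        · intro hall
          by_contra hne
          obtain ⟨n, hn⟩ := exists_nat_one_div_lt (abs_pos.mpr hne)
          exact absurd (hall n) (not_lt.mpr hn.le)
        · intro h0 n
          rw [h0, abs_zero]
          positivity
      rw [hint] at htend
      have hz : μ01 {t : ℝ | w t = 0} = 0 := by
        apply measure_mono_null ?_ (ae_iff.mp hwpos)
        intro t ht
        simp only [Set.mem_setOf_eq] at ht ⊢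
        rw [ht]
        simp
      rw [hz] at htend
      have hev := htend.eventually_lt_const (ENNReal.ofReal_pos.mpr hδ0)
      obtain ⟨n, hn⟩ := hev.exists
      exact ⟨1/(n+1 : ℝ), by positivity, hn.le⟩
    set g : ℝ → ℝ := fun t => if |w t| < σ then 0 else h t / w t with hgdef
    have hgmeas : Measurable g := Measurable.ite (measurableSet_lt hw.abs measurable_const)
      measurable_const (hhmeas2.div hw)
    have hgbdd : eLpNorm g ⊤ μ01 ≠ ∞ := by
      have hb : ∀ᵐ t ∂μ01, ‖g t‖ ≤ D / σ := by
        filter_upwards [hD] with t ht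
        simp only [Real.norm_eq_abs, hgdef]
        split_ifs with hc
        · simpa using div_nonneg hD0 hσ0.le
        · push_neg at hc
          rw [abs_div]
          exact div_le_div₀ hD0 ht hσ0 hc
      rw [eLpNorm_exponent_top]
      exact ((eLpNormEssSup_le_of_ae_bound hb).trans_lt ENNReal.ofReal_lt_top).ne
    refine ⟨g, hgmeas, hgbdd, ?_⟩
    set x : ℝ → ℝ := fun t => if |w t| < σ then h t else 0 with hxdef
    have hxmeas : Measurable x := Measurable.ite (measurableSet_lt hw.abs measurable_const)
      hhmeas2 measurable_const
    have hwlow : ∀ s ∈ Set.Ioc (0:ℝ) δ, τ0 ≤ rearr w s := by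
      intro s hs
      apply le_rearr w hw hs.1
      intro τ' hτ'0 hτ'd
      by_contra hτ'lt
      push_neg at hτ'lt
      have h1 : distFn w τ0 ≤ distFn w τ' := distFn_anti w hτ'lt.le
      have h2 : distFn w τ0 ≤ ENNReal.ofReal s := le_trans h1 hτ'd
      have h3 : ENNReal.ofReal s ≤ ENNReal.ofReal (1/2) :=
        ENNReal.ofReal_le_ofReal (le_trans hs.2 hδhalf)
      exact absurd (lt_of_lt_of_le hτ0 (le_trans h2 h3)) (lt_irrefl _)
    have hx1 : ∀ s ∈ Set.Ioc (0:ℝ) δ, rearr x s ≤ (D+1)/τ0 * rearr w s := by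
      intro s hs
      have hxD : rearr x s ≤ D := by
        apply rearr_le x hD0
        have hznull : μ01 {t : ℝ | D < |x t|} = 0 := by
          apply measure_mono_null ?_ (ae_iff.mp hD)
          intro t ht
          simp only [Set.mem_setOf_eq, hxdef] at ht
          simp only [Set.mem_setOf_eq, not_le]
          split_ifs at ht with hc
          · exact ht
          · rw [abs_zero] at ht; linarith
        rw [show distFn x D = μ01 {t : ℝ | D < |x t|} from rfl, hznull]
        exact zero_le
      refine le_trans hxD ?_
      have h1 : (D+1)/τ0 * τ0 ≤ (D+1)/τ0 * rearr w s :=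
        mul_le_mul_of_nonneg_left (hwlow s hs) (by positivity)
      rw [div_mul_cancel₀ _ (ne_of_gt hτ00)] at h1
      linarith
    have hx2 : ∀ s ∈ Set.Ioc δ (1:ℝ), rearr x s = 0 := by
      intro s hs
      apply rearr_eq_zero
      refine le_trans (measure_mono ?_) (le_trans hσ (ENNReal.ofReal_le_ofReal hs.1.le))
      intro t ht
      simp only [Set.mem_setOf_eq, hxdef] at ht ⊢
      by_contra hnot
      rw [if_neg hnot] at ht
      exact ht rfl
    have hxN : Y.N x ≤ ENNReal.ofReal (ε/2) := hL x hxmeas hx1 hx2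
    have hdecomp : (fun t => (f t - g t) * w t) = fun t => (f t * w t - h t) + x t := by
      funext t
      simp only [hgdef, hxdef]
      split_ifs with hc
      · ring
      · push_neg at hc
        have hwne : w t ≠ 0 := by
          intro h0
          rw [h0, abs_zero] at hc
          linarith
        rw [sub_mul, div_mul_cancel₀ _ hwne, add_zero]
    show Y.N (fun t => (f t - g t) * w t) ≤ ENNReal.ofReal ε
    calc Y.N (fun t => (f t - g t) * w t) = Y.N (fun t => (f t * w t - h t) + x t) := by
          rw [hdecomp]
      _ ≤ Y.N (fun t => f t * w t - h t) + Y.N x := Y.norm_add _ _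
      _ ≤ ENNReal.ofReal (ε/2) + ENNReal.ofReal (ε/2) := add_le_add hhapp hxN
      _ = ENNReal.ofReal ε := by
          rw [← ENNReal.ofReal_add (by linarith) (by linarith)]; norm_num
end

section
/- For all sufficiently large n = 2^m (m ∈ ℕ) there exists a subset J of {1, …, 2^n} of cardinality n such that the set D = ⋃_{j∈J} Δ_n^j (a union of n dyadic intervals of rank n, of total measure n·2^{−n}) satisfies ‖χ_D‖_{M(L₁)} ≥ (1/2)·n^{3/2}·2^{−n}; J can be chosen so that each column of the n×n matrix (ε^n_{ij})_{1≤i≤n, j∈J} has exactly one entry equal to −1 and the rest equal to 1, where ε^n_{ij} is the value of r_i on Δ_n^j. -/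
open MeasureTheory Filter Set
open scoped ENNReal NNReal BigOperators

namespace Stmt17

noncomputable section

def eps (v k : ℕ) : ℝ := if Nat.testBit v k then -1 else 1

def Ssum (n v : ℕ) : ℝ := ∑ k ∈ Finset.range n, eps v k

lemma eps_sq (v k : ℕ) : eps v k ^ 2 = 1 := by
  unfold eps; split <;> norm_num

lemma eps_abs (v k : ℕ) : |eps v k| = 1 := by
  unfold eps; split <;> norm_num

lemma eps_xor_self (v i : ℕ) : eps (v ^^^ 2 ^ i) i = -eps v i := by
  unfold eps
  rw [Nat.testBit_xor, Nat.testBit_two_pow_self]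
  cases h : Nat.testBit v i <;> simp [h]

lemma eps_xor_ne (v i k : ℕ) (hik : i ≠ k) : eps (v ^^^ 2 ^ i) k = eps v k := by
  unfold eps
  rw [Nat.testBit_xor, Nat.testBit_two_pow_of_ne hik]
  simp

lemma orth {n i k : ℕ} (hi : i < n) (hik : i ≠ k) :
    ∑ v ∈ Finset.range (2 ^ n), eps v i * eps v k = 0 := by
  refine Finset.sum_involution (g := fun v _ => v ^^^ 2 ^ i) ?_ ?_ ?_ ?_
  · intro v _
    rw [eps_xor_self, eps_xor_ne _ _ _ hik]; ring
  · intro v _ _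
    intro h
    have := congrArg (fun x => Nat.testBit x i) h
    simp [Nat.testBit_xor, Nat.testBit_two_pow_self] at this
  · intro v hv
    exact Finset.mem_range.mpr
      (Nat.xor_lt_two_pow (Finset.mem_range.mp hv) (Nat.pow_lt_pow_right one_lt_two hi))
  · intro v _
    simp [Nat.xor_assoc]

lemma sum_sq (n : ℕ) : ∑ v ∈ Finset.range (2 ^ n), Ssum n v ^ 2 = (n : ℝ) * 2 ^ n := by
  have h1 : ∀ v, Ssum n v ^ 2
      = ∑ i ∈ Finset.range n, ∑ k ∈ Finset.range n, eps v i * eps v k := by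
    intro v; rw [sq, Ssum, Finset.sum_mul_sum]
  simp_rw [h1]
  rw [Finset.sum_comm]
  have h2 : ∀ i ∈ Finset.range n,
      (∑ v ∈ Finset.range (2 ^ n), ∑ k ∈ Finset.range n, eps v i * eps v k) = 2 ^ n := by
    intro i hi
    rw [Finset.sum_comm]
    have h3 : ∀ k ∈ Finset.range n,
        (∑ v ∈ Finset.range (2 ^ n), eps v i * eps v k)
          = if k = i then (2:ℝ) ^ n else 0 := by
      intro k _
      by_cases hk : k = i
      · subst hk
        simp_rw [← sq, eps_sq]
        simp
      · rw [if_neg hk]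
        exact orth (Finset.mem_range.mp hi) (fun h => hk h.symm)
    rw [Finset.sum_congr rfl h3, Finset.sum_ite_eq' _ _ (fun _ => (2:ℝ)^n), if_pos hi]
  rw [Finset.sum_congr rfl h2]
  simp [mul_comm]

lemma abs_sum (n : ℕ) :
    ∑ v ∈ Finset.range (2 ^ n), |Ssum n v| ≤ Real.sqrt n * 2 ^ n := by
  have h := Finset.sum_mul_sq_le_sq_mul_sq (Finset.range (2 ^ n))
    (fun _ => (1:ℝ)) (fun v => |Ssum n v|)
  simp only [one_mul, one_pow, sq_abs, Finset.sum_const, Finset.card_range,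
    nsmul_eq_mul, mul_one] at h
  rw [sum_sq] at h
  have hnn : (0:ℝ) ≤ ∑ v ∈ Finset.range (2 ^ n), |Ssum n v| :=
    Finset.sum_nonneg fun _ _ => abs_nonneg _
  have := Real.sqrt_le_sqrt h
  rw [Real.sqrt_sq hnn] at this
  refine this.trans (le_of_eq ?_)
  push_cast
  rw [show ((2:ℝ)^n * ((n:ℝ) * 2 ^ n)) = (n : ℝ) * ((2:ℝ)^n)^2 by ring,
    Real.sqrt_mul (Nat.cast_nonneg n), Real.sqrt_sq (by positivity)]

lemma Ssum_two_pow {n p : ℕ} (hp : p < n) : Ssum n (2 ^ p) = (n : ℝ) - 2 := by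
  unfold Ssum eps
  have : ∀ k ∈ Finset.range n,
      (if Nat.testBit (2 ^ p) k then (-1:ℝ) else 1) = 1 + (if p = k then (-2:ℝ) else 0) := by
    intro k _
    rw [Nat.testBit_two_pow]
    by_cases h : p = k <;> simp [h] <;> norm_num
  rw [Finset.sum_congr rfl this, Finset.sum_add_distrib,
    Finset.sum_ite_eq _ _ (fun _ => (-2:ℝ)), if_pos (Finset.mem_range.mpr hp)]
  simp
  ring

lemma rademacher_on_Ioo {n i v : ℕ} (hi1 : 1 ≤ i) (hin : i ≤ n) {t : ℝ}
    (ht : t ∈ Set.Ioo ((v : ℝ) / 2 ^ n) (((v : ℝ) + 1) / 2 ^ n)) :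
    rademacher i t = eps v (n - i) := by
  set p := n - i with hp
  have hip : i + p = n := by omega
  set q := v / 2 ^ p with hq
  have h2p : (0:ℝ) < 2 ^ p := by positivity
  have h2n : (0:ℝ) < 2 ^ n := by positivity
  have h2i : (0:ℝ) < 2 ^ i := by positivity
  have e1 : (q : ℝ) * 2 ^ p ≤ v := by exact_mod_cast Nat.div_mul_le_self v (2 ^ p)
  have e2 : (v : ℝ) + 1 ≤ ((q : ℝ) + 1) * 2 ^ p := by
    have hmod : v % 2 ^ p < 2 ^ p := Nat.mod_lt _ (Nat.pow_pos (by norm_num))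
    have hdm : 2 ^ p * q + v % 2 ^ p = v := by rw [hq]; exact Nat.div_add_mod v (2 ^ p)
    have : v + 1 ≤ (q + 1) * 2 ^ p := by nlinarith
    exact_mod_cast this
  have epn : (2:ℝ) ^ i * 2 ^ p = 2 ^ n := by
    rw [← pow_add, hip]
  have hlt1 : (v : ℝ) < t * 2 ^ n := by
    have := ht.1; rw [div_lt_iff₀ h2n] at this; linarith
  have hlt2 : t * 2 ^ n < (v : ℝ) + 1 := by
    have := ht.2; rw [lt_div_iff₀ h2n] at this; linarith
  have key1 : (q : ℝ) < 2 ^ i * t := by nlinarith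
  have key2 : 2 ^ i * t < (q : ℝ) + 1 := by nlinarith
  have hsplit : (2:ℝ) ^ i * Real.pi * t = Real.pi * (2 ^ i * t - q) + (q : ℤ) * Real.pi := by
    push_cast; ring
  have hpos : 0 < Real.sin (Real.pi * (2 ^ i * t - q)) :=
    Real.sin_pos_of_pos_of_lt_pi (by nlinarith [Real.pi_pos])
      (by nlinarith [Real.pi_pos])
  rw [rademacher, hsplit, Real.sin_add_int_mul_pi,
    show ((-1:ℝ)) ^ (q : ℤ) = (-1:ℝ) ^ q from zpow_natCast (-1:ℝ) q]
  rcases Nat.even_or_odd q with he | ho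
  · rw [he.neg_one_pow, one_mul, Real.sign_of_pos hpos]
    have hm : v / 2 ^ p % 2 = 0 := Nat.even_iff.mp (hq ▸ he)
    unfold eps
    rw [Nat.testBit_eq_decide_div_mod_eq]
    simp [hm]
  · rw [ho.neg_one_pow, neg_one_mul, Real.sign_of_neg (by linarith)]
    have hm : v / 2 ^ p % 2 = 1 := Nat.odd_iff.mp (hq ▸ ho)
    unfold eps
    rw [Nat.testBit_eq_decide_div_mod_eq]
    simp [hm]

lemma sum_rad_on_Ioo {n v : ℕ} {t : ℝ}
    (ht : t ∈ Set.Ioo ((v : ℝ) / 2 ^ n) (((v : ℝ) + 1) / 2 ^ n)) :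
    ∑ i ∈ Finset.Icc 1 n, rademacher i t = Ssum n v := by
  rw [Finset.sum_congr rfl (fun i hi =>
    rademacher_on_Ioo (Finset.mem_Icc.mp hi).1 (Finset.mem_Icc.mp hi).2 ht)]
  unfold Ssum
  refine Finset.sum_nbij' (i := fun i => n - i) (j := fun k => n - k) ?_ ?_ ?_ ?_ ?_
  · intro a ha; simp only [Finset.mem_Icc] at ha; simp only [Finset.mem_range]; omega
  · intro a ha; simp only [Finset.mem_range] at ha; simp only [Finset.mem_Icc]; omega
  · intro a ha; simp only [Finset.mem_Icc] at ha; show n - (n - a) = a; omega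
  · intro a ha; simp only [Finset.mem_range] at ha; show n - (n - a) = a; omega
  · intro a _; rfl

/-- The coefficient sequence. -/
def aseq (n : ℕ) : ℕ → ℝ := fun k => if k ∈ Finset.Icc 1 n then (Real.sqrt n)⁻¹ else 0

/-- The Rademacher sum function. -/
def gfun (n : ℕ) : ℝ → ℝ :=
  fun t => (Real.sqrt n)⁻¹ * ∑ i ∈ Finset.Icc 1 n, rademacher i t

/-- Open dyadic interval. -/
def Iv (n v : ℕ) : Set ℝ := Set.Ioo ((v : ℝ) / 2 ^ n) (((v : ℝ) + 1) / 2 ^ n)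

/-- The index set. -/
def Jset (n : ℕ) : Finset ℕ := (Finset.Icc 1 n).image (fun i => 2 ^ (n - i) + 1)

lemma radSum_aseq (n : ℕ) : radSum (aseq n) = gfun n := by
  funext t
  apply Filter.Tendsto.limUnder_eq
  apply Filter.Tendsto.congr' (f₁ := fun _ => gfun n t) _ tendsto_const_nhds
  filter_upwards [eventually_ge_atTop n] with N hN
  rw [radPartial]
  rw [← Finset.sum_subset (Finset.Icc_subset_Icc_right hN)
    (fun k _ hk => by
      simp only [aseq, if_neg hk, zero_mul])]
  rw [gfun, Finset.mul_sum]
  refine Finset.sum_congr rfl fun k hk => ?_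
  simp only [aseq, if_pos hk]

lemma ell2_aseq (n : ℕ) : ell2 (aseq n) ≠ ∞ := by
  rw [ell2]
  apply ENNReal.rpow_ne_top_of_nonneg (by norm_num)
  rw [tsum_eq_sum (s := Finset.range n) (fun k hk => by
    have h1 : k + 1 ∉ Finset.Icc 1 n := by
      simp only [Finset.mem_range, not_lt] at hk
      simp only [Finset.mem_Icc]; omega
    simp only [aseq, if_neg h1]
    norm_num)]
  exact (ENNReal.sum_lt_top.mpr fun _ _ => ENNReal.ofReal_lt_top).ne

lemma gfun_on_Iv {n v : ℕ} {t : ℝ} (ht : t ∈ Iv n v) :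
    gfun n t = (Real.sqrt n)⁻¹ * Ssum n v := by
  rw [gfun, sum_rad_on_Ioo ht]

lemma Iv_disjoint {n v w : ℕ} (hvw : v ≠ w) : Disjoint (Iv n v) (Iv n w) := by
  have key : ∀ v w : ℕ, v < w → Disjoint (Iv n v) (Iv n w) := by
    intro v w hlt
    rw [Set.disjoint_left]
    intro t ht1 ht2
    have h2n : (0:ℝ) < 2 ^ n := by positivity
    have h1 : (v:ℝ) + 1 ≤ (w:ℝ) := by exact_mod_cast hlt
    have h2 : ((v:ℝ) + 1) / 2 ^ n ≤ (w:ℝ) / 2 ^ n := by gcongr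
    exact absurd (ht1.2.trans_le (h2.trans ht2.1.le)) (lt_irrefl t)
  rcases hvw.lt_or_gt with h | h
  · exact key _ _ h
  · exact (key _ _ h).symm

lemma Iv_subset_unit {n v : ℕ} (hv : v < 2 ^ n) : Iv n v ⊆ Set.Icc (0:ℝ) 1 := by
  have h2n : (0:ℝ) < 2 ^ n := by positivity
  intro t ht
  constructor
  · have : (0:ℝ) ≤ (v : ℝ) / 2 ^ n := by positivity
    linarith [ht.1]
  · have hv' : (v : ℝ) + 1 ≤ 2 ^ n := by exact_mod_cast Nat.succ_le_of_lt hv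
    have : ((v:ℝ) + 1) / 2 ^ n ≤ 1 := by
      rw [div_le_one h2n]; exact hv'
    linarith [ht.2]

lemma Iv_subset_dyadic {n v : ℕ} : Iv n v ⊆ dyadic n (v + 1) := by
  intro t ht
  have : ((v + 1 : ℕ) : ℝ) - 1 = (v : ℝ) := by push_cast; ring
  rw [dyadic, this]
  have : ((v + 1 : ℕ) : ℝ) = (v : ℝ) + 1 := by push_cast; ring
  rw [this]
  exact Set.Ioo_subset_Icc_self ht


/-- The union set `D`. -/
def Dset (n : ℕ) : Set ℝ := ⋃ j ∈ Jset n, dyadic n j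

lemma Iv_meas {n v : ℕ} : MeasurableSet (Iv n v) := by
  unfold Iv; exact measurableSet_Ioo

lemma cover {n : ℕ} :
    Set.Icc (0:ℝ) 1 ⊆ ⋃ v : ℕ,
      (Set.Icc ((v : ℝ) / 2 ^ n) (((v : ℝ) + 1) / 2 ^ n) ∩ Set.Icc 0 1) := by
  intro t ht
  have h2n : (0:ℝ) < 2 ^ n := by positivity
  have hnn : (0:ℝ) ≤ t * 2 ^ n := mul_nonneg ht.1 h2n.le
  set v : ℕ := (⌊t * 2 ^ n⌋).toNat with hv
  have hfl : (v : ℝ) = ((⌊t * 2 ^ n⌋ : ℤ) : ℝ) := by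
    rw [hv]; exact_mod_cast Int.toNat_of_nonneg (Int.floor_nonneg.mpr hnn)
  refine Set.mem_iUnion.mpr ⟨v, ⟨⟨?_, ?_⟩, ht⟩⟩
  · rw [div_le_iff₀ h2n, hfl]; exact Int.floor_le _
  · rw [le_div_iff₀ h2n, hfl]; exact (Int.lt_floor_add_one _).le

lemma tail_zero {n v : ℕ} (hv : 2 ^ n ≤ v) :
    volume (Set.Icc ((v : ℝ) / 2 ^ n) (((v : ℝ) + 1) / 2 ^ n) ∩ Set.Icc 0 1) = 0 := by
  have h2n : (0:ℝ) < 2 ^ n := by positivity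
  refine measure_mono_null (fun t ht => ?_) (Real.volume_singleton (a := (1:ℝ)))
  have hv' : (1:ℝ) ≤ (v : ℝ) / 2 ^ n := by
    rw [le_div_iff₀ h2n, one_mul]; exact_mod_cast hv
  exact Set.mem_singleton_iff.mpr (le_antisymm ht.2.2 (hv'.trans ht.1.1))

lemma hdiff {n v : ℕ} : ((v:ℝ) + 1) / 2 ^ n - (v:ℝ) / 2 ^ n = ((2:ℝ) ^ n)⁻¹ := by
  have h2n : (0:ℝ) < 2 ^ n := by positivity
  field_simp
  ring

lemma μ01_eq : μ01 = volume.restrict (Set.Icc (0:ℝ) 1) := rfl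

lemma L1_upper {n : ℕ} (hn : 1 ≤ n) : L1N (gfun n) ≤ 1 := by
  have h2n : (0:ℝ) < 2 ^ n := by positivity
  have hsq : (0:ℝ) < Real.sqrt n := Real.sqrt_pos.mpr (by exact_mod_cast hn)
  rw [L1N, eLpNorm_one_eq_lintegral_enorm, μ01_eq]
  calc ∫⁻ t in Set.Icc (0:ℝ) 1, (‖gfun n t‖₊ : ℝ≥0∞) ∂volume
      ≤ ∫⁻ t in ⋃ v : ℕ, (Set.Icc ((v : ℝ) / 2 ^ n) (((v : ℝ) + 1) / 2 ^ n) ∩ Set.Icc 0 1),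
          (‖gfun n t‖₊ : ℝ≥0∞) ∂volume := lintegral_mono_set cover
    _ ≤ ∑' v : ℕ, ∫⁻ t in (Set.Icc ((v : ℝ) / 2 ^ n) (((v : ℝ) + 1) / 2 ^ n) ∩ Set.Icc 0 1),
          (‖gfun n t‖₊ : ℝ≥0∞) ∂volume := lintegral_iUnion_le _ _
    _ = ∑ v ∈ Finset.range (2 ^ n),
          ∫⁻ t in (Set.Icc ((v : ℝ) / 2 ^ n) (((v : ℝ) + 1) / 2 ^ n) ∩ Set.Icc 0 1),
          (‖gfun n t‖₊ : ℝ≥0∞) ∂volume := by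
        refine tsum_eq_sum fun v hv => ?_
        refine setLIntegral_measure_zero _ _ (tail_zero ?_)
        simpa using hv
    _ ≤ ∑ v ∈ Finset.range (2 ^ n),
          ENNReal.ofReal ((Real.sqrt n)⁻¹ * |Ssum n v| * ((2:ℝ) ^ n)⁻¹) := by
        refine Finset.sum_le_sum fun v _ => ?_
        calc ∫⁻ t in (Set.Icc ((v : ℝ) / 2 ^ n) (((v : ℝ) + 1) / 2 ^ n) ∩ Set.Icc 0 1),
              (‖gfun n t‖₊ : ℝ≥0∞) ∂volume
            ≤ ∫⁻ t in Set.Icc ((v : ℝ) / 2 ^ n) (((v : ℝ) + 1) / 2 ^ n),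
              (‖gfun n t‖₊ : ℝ≥0∞) ∂volume := lintegral_mono_set Set.inter_subset_left
          _ = ∫⁻ t in Set.Ioo ((v : ℝ) / 2 ^ n) (((v : ℝ) + 1) / 2 ^ n),
              (‖gfun n t‖₊ : ℝ≥0∞) ∂volume := (setLIntegral_congr Ioo_ae_eq_Icc).symm
          _ = ENNReal.ofReal ((Real.sqrt n)⁻¹ * |Ssum n v|)
                * volume (Set.Ioo ((v : ℝ) / 2 ^ n) (((v : ℝ) + 1) / 2 ^ n)) := by
              rw [setLIntegral_congr_fun_ae measurableSet_Ioo (ae_of_all _ fun t ht => ?_),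
                setLIntegral_const]
              rw [← enorm_eq_nnnorm, Real.enorm_eq_ofReal_abs, gfun_on_Iv ht, abs_mul,
                abs_of_nonneg (inv_nonneg.mpr hsq.le)]
          _ = ENNReal.ofReal ((Real.sqrt n)⁻¹ * |Ssum n v| * ((2:ℝ) ^ n)⁻¹) := by
              rw [Real.volume_Ioo, hdiff, ← ENNReal.ofReal_mul (by positivity)]
    _ = ENNReal.ofReal (∑ v ∈ Finset.range (2 ^ n),
          (Real.sqrt n)⁻¹ * |Ssum n v| * ((2:ℝ) ^ n)⁻¹) :=
        (ENNReal.ofReal_sum_of_nonneg (fun i _ => by positivity)).symm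
    _ ≤ 1 := by
        rw [← ENNReal.ofReal_one]
        apply ENNReal.ofReal_le_ofReal
        rw [← Finset.sum_mul, ← Finset.mul_sum]
        calc (Real.sqrt n)⁻¹ * (∑ v ∈ Finset.range (2 ^ n), |Ssum n v|) * ((2:ℝ) ^ n)⁻¹
            ≤ (Real.sqrt n)⁻¹ * (Real.sqrt n * 2 ^ n) * ((2:ℝ) ^ n)⁻¹ := by
              have := abs_sum n
              gcongr
          _ = 1 := by field_simp

lemma Jset_card {n : ℕ} : (Jset n).card = n := by
  rw [Jset, Finset.card_image_of_injOn, Nat.card_Icc]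
  · omega
  · intro i hi j hj hij
    simp only [Finset.coe_Icc, Set.mem_Icc] at hi hj
    have hij' : 2 ^ (n - i) + 1 = 2 ^ (n - j) + 1 := hij
    have := Nat.pow_right_injective (le_refl 2) (by omega : 2 ^ (n - i) = 2 ^ (n - j))
    omega

lemma Jset_subset {n : ℕ} (hn : 1 ≤ n) : Jset n ⊆ Finset.Icc 1 (2 ^ n) := by
  intro j hj
  obtain ⟨i, hi, rfl⟩ := Finset.mem_image.mp hj
  simp only [Finset.mem_Icc] at hi ⊢
  have h1 : 2 ^ (n - i) ≤ 2 ^ (n - 1) := Nat.pow_le_pow_right (by norm_num) (by omega)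
  have h2 : 2 ^ (n - 1) + 2 ^ (n - 1) = 2 ^ n := by
    rw [← two_mul, ← pow_succ']; congr 1; omega
  have h3 : 1 ≤ 2 ^ (n - 1) := Nat.one_le_two_pow
  have h4 : 1 ≤ 2 ^ (n - i) := Nat.one_le_two_pow
  omega

lemma Iv_subset_Dset {n i : ℕ} (hi : i ∈ Finset.Icc 1 n) :
    Iv n (2 ^ (n - i)) ⊆ Dset n := by
  intro t ht
  refine Set.mem_biUnion (Finset.mem_image_of_mem _ hi) (Iv_subset_dyadic ht)

lemma Iv_pairwise {n : ℕ} :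
    Set.PairwiseDisjoint ↑(Finset.Icc 1 n) (fun i => Iv n (2 ^ (n - i))) := by
  intro i hi j hj hne
  simp only [Finset.coe_Icc, Set.mem_Icc] at hi hj
  have : 2 ^ (n - i) ≠ 2 ^ (n - j) := by
    intro h
    have := Nat.pow_right_injective (le_refl 2) h
    omega
  exact Iv_disjoint this

lemma pow_sub_lt {n i : ℕ} (hi : i ∈ Finset.Icc 1 n) : 2 ^ (n - i) < 2 ^ n := by
  simp only [Finset.mem_Icc] at hi
  exact Nat.pow_lt_pow_right (by norm_num) (by omega)

lemma vol_D {n : ℕ} (hn : 1 ≤ n) :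
    volume (Dset n) = ENNReal.ofReal ((n : ℝ) / 2 ^ n) := by
  have h2n : (0:ℝ) < 2 ^ n := by positivity
  have hof : ENNReal.ofReal ((n : ℝ) / 2 ^ n)
      = (n : ℝ≥0∞) * ENNReal.ofReal (((2:ℝ) ^ n)⁻¹) := by
    rw [div_eq_mul_inv, ← ENNReal.ofReal_natCast n, ← ENNReal.ofReal_mul (by positivity)]
  apply le_antisymm
  · calc volume (Dset n) ≤ ∑ j ∈ Jset n, volume (dyadic n j) :=
          measure_biUnion_finset_le _ _
      _ = ∑ _j ∈ Jset n, ENNReal.ofReal (((2:ℝ) ^ n)⁻¹) := by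
          refine Finset.sum_congr rfl fun j _ => ?_
          rw [dyadic, Real.volume_Icc]
          congr 1
          field_simp
          ring
      _ = (n : ℝ≥0∞) * ENNReal.ofReal (((2:ℝ) ^ n)⁻¹) := by
          rw [Finset.sum_const, Jset_card, nsmul_eq_mul]
      _ = ENNReal.ofReal ((n : ℝ) / 2 ^ n) := hof.symm
  · calc ENNReal.ofReal ((n : ℝ) / 2 ^ n)
        = (n : ℝ≥0∞) * ENNReal.ofReal (((2:ℝ) ^ n)⁻¹) := hof
      _ = ∑ i ∈ Finset.Icc 1 n, volume (Iv n (2 ^ (n - i))) := by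
          rw [Finset.sum_congr rfl (fun i _ => by
            rw [show Iv n (2 ^ (n - i)) = Set.Ioo (((2 ^ (n - i) : ℕ) : ℝ) / 2 ^ n)
              ((((2 ^ (n - i) : ℕ)) + 1 : ℝ) / 2 ^ n) from rfl, Real.volume_Ioo, hdiff]),
            Finset.sum_const, Nat.card_Icc, nsmul_eq_mul]
          congr 2 <;> omega
      _ = volume (⋃ i ∈ Finset.Icc 1 n, Iv n (2 ^ (n - i))) :=
          (measure_biUnion_finset Iv_pairwise (fun _ _ => Iv_meas)).symm
      _ ≤ volume (Dset n) := by
          refine measure_mono (Set.iUnion₂_subset fun i hi => Iv_subset_Dset hi)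

lemma L1_lower {n : ℕ} (hn : 4 ≤ n) :
    ENNReal.ofReal ((Real.sqrt n)⁻¹ * ((n:ℝ) - 2) * n * ((2:ℝ) ^ n)⁻¹)
      ≤ L1N (fun t => (Dset n).indicator (fun _ => (1:ℝ)) t * gfun n t) := by
  have h2n : (0:ℝ) < 2 ^ n := by positivity
  have hn4 : (4:ℝ) ≤ (n:ℝ) := by exact_mod_cast hn
  have hsq : (0:ℝ) < Real.sqrt n := Real.sqrt_pos.mpr (by linarith)
  rw [L1N, eLpNorm_one_eq_lintegral_enorm, μ01_eq]
  have hval : (0:ℝ) ≤ (Real.sqrt n)⁻¹ * ((n:ℝ) - 2) := by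
    apply mul_nonneg (inv_nonneg.mpr hsq.le); linarith
  calc ENNReal.ofReal ((Real.sqrt n)⁻¹ * ((n:ℝ) - 2) * n * ((2:ℝ) ^ n)⁻¹)
      = ∑ i ∈ Finset.Icc 1 n,
          ENNReal.ofReal ((Real.sqrt n)⁻¹ * ((n:ℝ) - 2) * ((2:ℝ) ^ n)⁻¹) := by
        rw [Finset.sum_const, Nat.card_Icc, show n + 1 - 1 = n from rfl, nsmul_eq_mul,
          ← ENNReal.ofReal_natCast n, ← ENNReal.ofReal_mul (by positivity)]
        congr 1
        ring
    _ = ∑ i ∈ Finset.Icc 1 n, ∫⁻ t in Iv n (2 ^ (n - i)),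
          (‖(Dset n).indicator (fun _ => (1:ℝ)) t * gfun n t‖₊ : ℝ≥0∞) ∂volume := by
        refine Finset.sum_congr rfl fun i hi => ?_
        have hmem := Finset.mem_Icc.mp hi
        have hplt : n - i < n := by omega
        have hconst : ∀ t ∈ Iv n (2 ^ (n - i)),
            (‖(Dset n).indicator (fun _ => (1:ℝ)) t * gfun n t‖₊ : ℝ≥0∞)
              = ENNReal.ofReal ((Real.sqrt n)⁻¹ * ((n:ℝ) - 2)) := by
          intro t ht
          rw [← enorm_eq_nnnorm, Real.enorm_eq_ofReal_abs,
            Set.indicator_of_mem (Iv_subset_Dset hi ht), one_mul,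
            gfun_on_Iv ht, Ssum_two_pow hplt, abs_of_nonneg hval]
        rw [show Iv n (2 ^ (n - i)) = Set.Ioo (((2 ^ (n - i) : ℕ) : ℝ) / 2 ^ n)
            ((((2 ^ (n - i) : ℕ)) + 1 : ℝ) / 2 ^ n) from rfl] at hconst ⊢
        rw [setLIntegral_congr_fun_ae measurableSet_Ioo (ae_of_all _ hconst),
          setLIntegral_const, Real.volume_Ioo, hdiff,
          ← ENNReal.ofReal_mul (by positivity)]
    _ = ∫⁻ t in ⋃ i ∈ Finset.Icc 1 n, Iv n (2 ^ (n - i)),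
          (‖(Dset n).indicator (fun _ => (1:ℝ)) t * gfun n t‖₊ : ℝ≥0∞) ∂volume :=
        (lintegral_biUnion_finset Iv_pairwise (fun _ _ => Iv_meas) _).symm
    _ ≤ ∫⁻ t in Set.Icc (0:ℝ) 1,
          (‖(Dset n).indicator (fun _ => (1:ℝ)) t * gfun n t‖₊ : ℝ≥0∞) ∂volume := by
        refine lintegral_mono_set (Set.iUnion₂_subset fun i hi => ?_)
        exact (Iv_subset_unit (pow_sub_lt hi))

lemma epsVal_column {n i i₀ : ℕ} (hi : i ∈ Finset.Icc 1 n) (hi₀ : i₀ ∈ Finset.Icc 1 n) :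
    epsVal n i (2 ^ (n - i₀) + 1) = if i = i₀ then -1 else 1 := by
  have hmemi := Finset.mem_Icc.mp hi
  have hmemi₀ := Finset.mem_Icc.mp hi₀
  have h2n : (0:ℝ) < 2 ^ n := by positivity
  have hjr : (((2 ^ (n - i₀) + 1 : ℕ) : ℝ)) - 1/2 = ((2 ^ (n - i₀) : ℕ) : ℝ) + 1/2 := by
    push_cast; ring
  have hmid : ((((2 ^ (n - i₀) + 1 : ℕ) : ℝ)) - 1/2) / 2 ^ n
      ∈ Set.Ioo (((2 ^ (n - i₀) : ℕ) : ℝ) / 2 ^ n) ((((2 ^ (n - i₀) : ℕ) : ℝ) + 1) / 2 ^ n) := by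
    rw [hjr]
    constructor
    · exact (div_lt_div_iff_of_pos_right h2n).mpr (by linarith)
    · exact (div_lt_div_iff_of_pos_right h2n).mpr (by linarith)
  rw [epsVal, rademacher_on_Ioo hmemi.1 hmemi.2 hmid, eps, Nat.testBit_two_pow]
  by_cases h : i = i₀
  · subst h; simp
  · have : ¬ (n - i₀ = n - i) := by omega
    simp [h, this]

lemma numeric {n : ℕ} (hn : 4 ≤ n) :
    (1/2) * ((n:ℝ)) ^ ((3:ℝ)/2) / 2 ^ n
      ≤ (Real.sqrt n)⁻¹ * ((n:ℝ) - 2) * n * ((2:ℝ) ^ n)⁻¹ := by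
  have hx : (4:ℝ) ≤ (n:ℝ) := by exact_mod_cast hn
  have h2n : (0:ℝ) < 2 ^ n := by positivity
  have hs : Real.sqrt n ^ 2 = (n:ℝ) := Real.sq_sqrt (by linarith)
  have hspos : 0 < Real.sqrt n := Real.sqrt_pos.mpr (by linarith)
  have hinv : (Real.sqrt n)⁻¹ * Real.sqrt n = 1 := inv_mul_cancel₀ hspos.ne'
  have h3 : (Real.sqrt n)⁻¹ * (n:ℝ) = Real.sqrt n := by
    rw [inv_mul_eq_div, div_eq_iff hspos.ne']
    exact (Real.mul_self_sqrt (by linarith)).symm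
  have hrp : ((n:ℝ)) ^ ((3:ℝ)/2) = (n:ℝ) * Real.sqrt n := by
    rw [show (3:ℝ)/2 = 1 + 1/2 by norm_num, Real.rpow_add (by linarith), Real.rpow_one,
      ← Real.sqrt_eq_rpow]
  rw [hrp, div_eq_mul_inv]
  have key : (1/2) * ((n:ℝ) * Real.sqrt n) ≤ (Real.sqrt n)⁻¹ * ((n:ℝ) - 2) * n := by
    have heq : (Real.sqrt n)⁻¹ * ((n:ℝ) - 2) * n = ((n:ℝ) - 2) * Real.sqrt n := by
      rw [show (Real.sqrt n)⁻¹ * ((n:ℝ) - 2) * n = ((n:ℝ) - 2) * ((Real.sqrt n)⁻¹ * n) by ring,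
        h3]
    rw [heq]
    nlinarith [hspos]
  exact mul_le_mul_of_nonneg_right key (by positivity)

end

end Stmt17


/-- For all sufficiently large `n = 2^m` there is a set `J ⊂ {1,…,2^n}` of
cardinality `n` such that each column of the matrix `(ε^n_{ij})_{1≤i≤n, j∈J}` has exactly one
entry `-1` (the rest being `1`) and the set `D = ⋃_{j∈J} Δ_n^j` (of measure `n 2^{-n}`)
satisfies `‖χ_D‖_{M(L₁)} ≥ (1/2) n^{3/2} 2^{-n}`. -/
theorem statement17 :
    ∃ m₀ : ℕ, ∀ m : ℕ, m₀ ≤ m →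
      ∃ J : Finset ℕ, J ⊆ Finset.Icc 1 (2 ^ 2 ^ m) ∧ J.card = 2 ^ m ∧
        (∀ j ∈ J, ∃ i₀ ∈ Finset.Icc 1 (2 ^ m), ∀ i ∈ Finset.Icc 1 (2 ^ m),
          epsVal (2 ^ m) i j = if i = i₀ then -1 else 1) ∧
        volume (⋃ j ∈ J, dyadic (2 ^ m) j)
          = ENNReal.ofReal ((2:ℝ) ^ m / 2 ^ 2 ^ m) ∧
        ENNReal.ofReal ((1/2) * ((2:ℝ) ^ m) ^ ((3:ℝ)/2) / 2 ^ 2 ^ m)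
          ≤ radMultNorm L1N ((⋃ j ∈ J, dyadic (2 ^ m) j).indicator fun _ => (1:ℝ)) := by
  refine ⟨2, fun m hm => ?_⟩
  set n := 2 ^ m with hnm
  have hn4 : 4 ≤ n := by
    have : 2 ^ 2 ≤ 2 ^ m := Nat.pow_le_pow_right (by norm_num) hm
    simpa [hnm] using this
  have hn1 : 1 ≤ n := by omega
  have hcast : ((n : ℕ) : ℝ) = (2:ℝ) ^ m := by rw [hnm]; push_cast; ring
  refine ⟨Stmt17.Jset n, Stmt17.Jset_subset hn1, Stmt17.Jset_card, ?_, ?_, ?_⟩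
  · intro j hj
    obtain ⟨i₀, hi₀, rfl⟩ := Finset.mem_image.mp hj
    exact ⟨i₀, hi₀, fun i hi => Stmt17.epsVal_column hi hi₀⟩
  · show volume (Stmt17.Dset n) = _
    rw [Stmt17.vol_D hn1, hcast]
  · show ENNReal.ofReal ((1/2) * ((2:ℝ) ^ m) ^ ((3:ℝ)/2) / 2 ^ n)
      ≤ radMultNorm L1N ((Stmt17.Dset n).indicator fun _ => (1:ℝ))
    have hradsum := Stmt17.radSum_aseq n
    have hL1up : L1N (radSum (Stmt17.aseq n)) ≤ 1 := by
      rw [hradsum]; exact Stmt17.L1_upper hn1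
    have hfun : (fun t => (Stmt17.Dset n).indicator (fun _ => (1:ℝ)) t
        * radSum (Stmt17.aseq n) t)
        = (fun t => (Stmt17.Dset n).indicator (fun _ => (1:ℝ)) t * Stmt17.gfun n t) := by
      rw [hradsum]
    calc ENNReal.ofReal ((1/2) * ((2:ℝ) ^ m) ^ ((3:ℝ)/2) / 2 ^ n)
        = ENNReal.ofReal ((1/2) * ((n:ℝ)) ^ ((3:ℝ)/2) / 2 ^ n) := by rw [hcast]
      _ ≤ ENNReal.ofReal ((Real.sqrt n)⁻¹ * ((n:ℝ) - 2) * n * ((2:ℝ) ^ n)⁻¹) :=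
          ENNReal.ofReal_le_ofReal (Stmt17.numeric hn4)
      _ ≤ L1N (fun t => (Stmt17.Dset n).indicator (fun _ => (1:ℝ)) t
            * radSum (Stmt17.aseq n) t) := by
          rw [hfun]; exact Stmt17.L1_lower hn4
      _ ≤ radMultNorm L1N ((Stmt17.Dset n).indicator fun _ => (1:ℝ)) := by
          rw [radMultNorm]
          refine le_iSup_of_le (Stmt17.aseq n) ?_
          rw [iSup_pos (Stmt17.ell2_aseq n), iSup_pos hL1up]
end
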